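/- arXiv:2307.10880 — 2 statements merged into one kernel-verified Lean document; each statement's English description precedes it below -/
import Mathlib

section
/- Let Λ be a full-rank lattice in ℝ^n and let s be a nonnegative integer with s ≤ n/2. Then the inhomogeneous minimum satisfies M_s(Λ) ≤ 2^{s−n} · μ_n(Λ)^n. -/
noncomputable def NsFun (n s : ℕ) (u : EuclideanSpace ℝ (Fin n)) : ℝ :=
  (∏ i ∈ Finset.range (n - 2 * s), |if h : i < n then u ⟨i, h⟩ else 0|) *
    ∏ j ∈ Finset.range s,
      ((if h : n - 2 * s + 2 * j < n then u ⟨n - 2 * s + 2 * j, h⟩ else 0) ^ 2 +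
       (if h : n - 2 * s + 2 * j + 1 < n then u ⟨n - 2 * s + 2 * j + 1, h⟩ else 0) ^ 2)

/-- The full-rank lattice in `ℝ^n` spanned over `ℤ` by the `ℝ`-basis `B`. -/
noncomputable def latticeOf {n : ℕ} (B : Module.Basis (Fin n) ℝ (EuclideanSpace ℝ (Fin n))) :
    Set (EuclideanSpace ℝ (Fin n)) :=
  (Submodule.span ℤ (Set.range ⇑B) : Submodule ℤ (EuclideanSpace ℝ (Fin n)))

/-- The `k`-th successive minimum of `L ⊆ ℝ^n`: the smallest `μ` such that `L` contains `k`
linearly independent vectors of norm at most `μ`. -/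
noncomputable def succMin (n k : ℕ) (L : Set (EuclideanSpace ℝ (Fin n))) : ℝ :=
  sInf {μ : ℝ | ∃ v : Fin k → EuclideanSpace ℝ (Fin n),
    (∀ i, v i ∈ L ∧ ‖v i‖ ≤ μ) ∧ LinearIndependent ℝ v}

/-- The homogeneous minimum `m_s(L) = inf_{x ∈ L, x ≠ 0} N_s(x)`. -/
noncomputable def homMin (n s : ℕ) (L : Set (EuclideanSpace ℝ (Fin n))) : ℝ :=
  sInf {t : ℝ | ∃ x ∈ L, x ≠ 0 ∧ t = NsFun n s x}

/-- The inhomogeneous minimum `M_s(L) = sup_{u ∈ ℝ^n} inf_{x ∈ L} N_s(u − x)`. -/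
noncomputable def inhomMin (n s : ℕ) (L : Set (EuclideanSpace ℝ (Fin n))) : ℝ :=
  sSup {t : ℝ | ∃ u : EuclideanSpace ℝ (Fin n),
    t = sInf {c : ℝ | ∃ x ∈ L, c = NsFun n s (u - x)}}

/-!
Take `n` linearly independent lattice vectors `v i` of length at most `μ`. Rounding one coefficient
at a time against the orthogonal projection onto the span of the others (the nearest-plane
argument) yields, for every `u`, a lattice point `x` with `‖u - x‖² ≤ ∑ ‖v i‖² / 4 ≤ n μ² / 4`.
AM-GM applied to the `n` numbers `u_i²` and `(v_j² + w_j²) / 2` (each of the latter twice) gives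
`N_s(u)² ≤ 4^s (‖u‖² / n)^n`, hence `N_s(u - x) ≤ 2^s (μ / 2)^n`; let `μ` decrease to `μ_n(Λ)`.
-/

open Finset

theorem Real.prod_le_sum_div_card_pow {ι : Type*} (s : Finset ι) (z : ι → ℝ)
    (hz : ∀ i ∈ s, 0 ≤ z i) : ∏ i ∈ s, z i ≤ ((∑ i ∈ s, z i) / #s) ^ #s := by
  rcases s.eq_empty_or_nonempty with rfl | hs
  · simp
  have hcard : (#s : ℝ) ≠ 0 := by simpa using hs.ne_empty
  have amgm := Real.geom_mean_le_arith_mean_weighted s (fun _ => (#s : ℝ)⁻¹) z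
    (fun _ _ => inv_nonneg.mpr (Nat.cast_nonneg _)) (by simp [hcard]) hz
  rw [Real.finsetProd_rpow s z hz, ← Finset.mul_sum, inv_mul_eq_div] at amgm
  calc ∏ i ∈ s, z i = ((∏ i ∈ s, z i) ^ ((#s : ℕ) : ℝ)⁻¹) ^ #s :=
        (Real.rpow_inv_natCast_pow (prod_nonneg hz) (by simpa using hs.ne_empty)).symm
    _ ≤ _ := pow_le_pow_left₀ (Real.rpow_nonneg (prod_nonneg hz) _) amgm _

@[to_additive sum_range_two_mul]
theorem prod_range_two_mul {M : Type*} [CommMonoid M] (s : ℕ) (g : ℕ → M) :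
    ∏ i ∈ range (2 * s), g i = ∏ j ∈ range s, g (2 * j) * g (2 * j + 1) := by
  induction s with
  | zero => simp
  | succ s ih => rw [Nat.mul_succ, prod_range_succ, prod_range_succ, ih, prod_range_succ, mul_assoc]

-- The nearest-plane step: rounding the `b`-coefficient costs at most `‖b‖² / 4`, orthogonally to
-- the remaining problem of approximating `a' ∈ K` by points `y ∈ K`.
theorem exists_round_norm_sub_sq_le {E : Type*} [NormedAddCommGroup E] [InnerProductSpace ℝ E]
    (K : Submodule ℝ E) [K.HasOrthogonalProjection] (b : E) (t : ℝ) {a : E} (ha : a ∈ K) :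
    ∃ k : ℤ, ∃ a' ∈ K, ∀ y ∈ K, ‖t • b + a - (k • b + y)‖ ^ 2 ≤ ‖b‖ ^ 2 / 4 + ‖a' - y‖ ^ 2 := by
  set p := K.starProjection b
  set δ := t - round t
  have hp : p ∈ K := K.starProjection_apply_mem b
  refine ⟨round t, a + δ • p, K.add_mem ha (K.smul_mem _ hp), fun y hy => ?_⟩
  have hδ : δ ^ 2 ≤ (1 / 2) ^ 2 := by
    rw [← sq_abs]; exact pow_le_pow_left₀ (abs_nonneg _) (abs_sub_round t) 2
  have hbp : ‖b - p‖ ≤ ‖b‖ := by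
    rw [← K.starProjection_orthogonal_val]; exact Kᗮ.norm_starProjection_apply_le b
  have horth : inner ℝ (δ • (b - p)) (a + δ • p - y) = 0 := by
    have hres : a + δ • p - y ∈ K := K.sub_mem (K.add_mem ha (K.smul_mem _ hp)) hy
    rw [real_inner_smul_left,
      K.inner_left_of_mem_orthogonal hres (K.sub_starProjection_mem_orthogonal b), mul_zero]
  calc ‖t • b + a - (round t • b + y)‖ ^ 2 = ‖δ • (b - p) + (a + δ • p - y)‖ ^ 2 := by
        congr 2; simp only [δ, ← Int.cast_smul_eq_zsmul ℝ]; module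
    _ = δ ^ 2 * ‖b - p‖ ^ 2 + ‖a + δ • p - y‖ ^ 2 := by
        rw [norm_add_sq_real, horth, norm_smul, mul_pow, Real.norm_eq_abs, sq_abs]; ring
    _ ≤ (1 / 2) ^ 2 * ‖b‖ ^ 2 + ‖a + δ • p - y‖ ^ 2 := by gcongr
    _ = _ := by ring

theorem exists_mem_span_int_norm_sub_sq_le {ι E : Type*} [NormedAddCommGroup E]
    [InnerProductSpace ℝ E] (v : ι → E) (s : Finset ι) {u : E}
    (hu : u ∈ Submodule.span ℝ (v '' s)) :
    ∃ x ∈ Submodule.span ℤ (v '' s), ‖u - x‖ ^ 2 ≤ (∑ i ∈ s, ‖v i‖ ^ 2) / 4 := by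
  classical
  induction s using Finset.induction_on generalizing u with
  | empty =>
    simp only [coe_empty, Set.image_empty, Submodule.span_empty, Submodule.mem_bot] at hu ⊢
    exact ⟨0, rfl, by simp [hu]⟩
  | insert i s hi ih =>
    rw [coe_insert, Set.image_insert_eq] at hu ⊢
    obtain ⟨t, a, ha, rfl⟩ := Submodule.mem_span_insert.mp hu
    have : FiniteDimensional ℝ (Submodule.span ℝ (v '' s)) :=
      FiniteDimensional.span_of_finite ℝ (s.finite_toSet.image v)
    obtain ⟨k, a', ha', hround⟩ := exists_round_norm_sub_sq_le _ (v i) t ha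
    obtain ⟨y, hy, hya'⟩ := ih ha'
    refine ⟨k • v i + y, ?_, ?_⟩
    · exact Submodule.add_mem _
        (Submodule.smul_mem _ _ (Submodule.subset_span (Set.mem_insert _ _)))
        (Submodule.span_mono (Set.subset_insert _ _) hy)
    · have hround_y := hround y (Submodule.span_subset_span ℤ ℝ _ hy)
      rw [sum_insert hi]
      linarith

theorem exists_mem_span_int_norm_sub_sq_le_of_linearIndependent {ι E : Type*} [Fintype ι]
    [NormedAddCommGroup E] [InnerProductSpace ℝ E] [FiniteDimensional ℝ E] {v : ι → E}
    (hv : LinearIndependent ℝ v) (hcard : Fintype.card ι = Module.finrank ℝ E) (u : E) :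
    ∃ x ∈ Submodule.span ℤ (Set.range v), ‖u - x‖ ^ 2 ≤ (∑ i, ‖v i‖ ^ 2) / 4 := by
  have hu : u ∈ Submodule.span ℝ (v '' (univ : Finset ι)) := by
    rw [coe_univ, Set.image_univ, hv.span_eq_top_of_card_eq_finrank' hcard]; trivial
  simpa using exists_mem_span_int_norm_sub_sq_le v univ hu

theorem sq_prod_abs_mul_prod_sq_add_sq_le (f : ℕ → ℝ) (r s : ℕ) :
    ((∏ i ∈ range r, |f i|) * ∏ j ∈ range s, (f (r + 2 * j) ^ 2 + f (r + 2 * j + 1) ^ 2)) ^ 2 ≤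
      4 ^ s * ((∑ i ∈ range (r + 2 * s), f i ^ 2) / (r + 2 * s : ℕ)) ^ (r + 2 * s) := by
  set y : ℕ → ℝ := fun j => f (r + 2 * j) ^ 2 + f (r + 2 * j + 1) ^ 2
  -- each pair `(f (r + 2j), f (r + 2j + 1))` contributes two equal factors `y j / 2`
  set z : ℕ → ℝ := fun i => if i < r then f i ^ 2 else y ((i - r) / 2) / 2
  have hz_lt : ∀ i ∈ range r, z i = f i ^ 2 := fun i hi => if_pos (mem_range.mp hi)
  have hz_pair (j : ℕ) : z (r + 2 * j) = y j / 2 ∧ z (r + (2 * j + 1)) = y j / 2 := by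
    refine ⟨(if_neg (by omega)).trans ?_, (if_neg (by omega)).trans ?_⟩ <;> congr 3 <;> omega
  have hz_nonneg : ∀ i ∈ range (r + 2 * s), 0 ≤ z i := fun i _ => by
    simp only [z, y]; split <;> positivity
  have hprod : ∏ i ∈ range (r + 2 * s), z i =
      (∏ i ∈ range r, f i ^ 2) * ∏ j ∈ range s, (y j / 2) * (y j / 2) := by
    rw [prod_range_add, prod_range_two_mul, prod_congr rfl hz_lt]
    simp only [hz_pair]
  have hsum : ∑ i ∈ range (r + 2 * s), z i = ∑ i ∈ range (r + 2 * s), f i ^ 2 := by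
    rw [sum_range_add, sum_range_two_mul, sum_congr rfl hz_lt, sum_range_add, sum_range_two_mul]
    simp only [hz_pair, y, add_assoc, add_halves]
  have hpair_prod : ∏ j ∈ range s, (y j / 2) * (y j / 2) = (∏ j ∈ range s, y j ^ 2) / 4 ^ s := by
    rw [show (4 : ℝ) ^ s = ∏ _j ∈ range s, 4 by simp, ← prod_div_distrib]
    exact prod_congr rfl fun j _ => by ring
  calc _ = 4 ^ s * ∏ i ∈ range (r + 2 * s), z i := by
        rw [hprod, hpair_prod, mul_pow, ← prod_pow, ← prod_pow]
        simp only [sq_abs, y]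
        field_simp
    _ ≤ _ := by
        grw [Real.prod_le_sum_div_card_pow _ z hz_nonneg, hsum, card_range]

theorem nsFun_nonneg (n s : ℕ) (u : EuclideanSpace ℝ (Fin n)) : 0 ≤ NsFun n s u :=
  mul_nonneg (prod_nonneg fun _ _ => abs_nonneg _) (prod_nonneg fun _ _ => by positivity)

theorem nsFun_sq_le {n s : ℕ} (hs : 2 * s ≤ n) (u : EuclideanSpace ℝ (Fin n)) :
    NsFun n s u ^ 2 ≤ 4 ^ s * (‖u‖ ^ 2 / n) ^ n := by
  obtain ⟨r, rfl⟩ : ∃ r, n = r + 2 * s := ⟨n - 2 * s, by omega⟩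
  set f : ℕ → ℝ := fun i => if h : i < r + 2 * s then u ⟨i, h⟩ else 0
  have hnorm : ∑ i ∈ range (r + 2 * s), f i ^ 2 = ‖u‖ ^ 2 := by
    rw [EuclideanSpace.norm_sq_eq, ← Fin.sum_univ_eq_sum_range]
    exact sum_congr rfl fun i _ => by simp [f]
  have h := sq_prod_abs_mul_prod_sq_add_sq_le f r s
  rw [hnorm] at h
  simp only [NsFun, Nat.add_sub_cancel]
  exact h

theorem nsFun_le_of_norm_sq_le {n s : ℕ} (hs : 2 * s ≤ n) {u : EuclideanSpace ℝ (Fin n)} {ρ : ℝ}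
    (hρ : 0 ≤ ρ) (hu : ‖u‖ ^ 2 ≤ n * ρ ^ 2) : NsFun n s u ≤ 2 ^ s * ρ ^ n := by
  refine (pow_le_pow_iff_left₀ (nsFun_nonneg n s u) (by positivity) two_ne_zero).mp ?_
  calc NsFun n s u ^ 2 ≤ 4 ^ s * (‖u‖ ^ 2 / n) ^ n := nsFun_sq_le hs u
    _ ≤ 4 ^ s * (ρ ^ 2) ^ n := by
        gcongr
        exact div_le_of_le_mul₀ (Nat.cast_nonneg _) (sq_nonneg _) (by linarith)
    _ = (2 ^ s * ρ ^ n) ^ 2 := by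
        rw [show (4 : ℝ) ^ s = (2 ^ s) ^ 2 by rw [← pow_mul, pow_mul']; norm_num]; ring

theorem inhomMin_le_of_forall_exists_nsFun_sub_le {n s : ℕ} {L : Set (EuclideanSpace ℝ (Fin n))}
    {b : ℝ} (h : ∀ u, ∃ x ∈ L, NsFun n s (u - x) ≤ b) : inhomMin n s L ≤ b := by
  refine csSup_le ⟨_, 0, rfl⟩ ?_
  rintro _ ⟨u, rfl⟩
  obtain ⟨x, hx, hxb⟩ := h u
  have hbdd : BddBelow {c | ∃ x ∈ L, c = NsFun n s (u - x)} :=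
    ⟨0, by rintro _ ⟨y, -, rfl⟩; exact nsFun_nonneg n s _⟩
  exact (csInf_le hbdd ⟨x, hx, rfl⟩).trans hxb

theorem succMin_nonneg (n k : ℕ) (L : Set (EuclideanSpace ℝ (Fin n))) : 0 ≤ succMin n k L := by
  rcases k.eq_zero_or_pos with rfl | hk
  · -- with no vectors to choose every `μ` qualifies, and `sInf univ = 0` in `ℝ`
    have huniv : {μ : ℝ | ∃ v : Fin 0 → EuclideanSpace ℝ (Fin n),
        (∀ i, v i ∈ L ∧ ‖v i‖ ≤ μ) ∧ LinearIndependent ℝ v} = Set.univ :=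
      Set.eq_univ_of_forall fun _ => ⟨finZeroElim, finZeroElim, linearIndependent_empty_type⟩
    simp only [succMin, huniv, Real.sInf_univ, le_refl]
  · exact Real.sInf_nonneg fun μ ⟨v, hv, _⟩ => (norm_nonneg _).trans (hv ⟨0, hk⟩).2

theorem exists_mem_nsFun_sub_le {n s : ℕ} (hs : 2 * s ≤ n)
    (L : Submodule ℤ (EuclideanSpace ℝ (Fin n))) {v : Fin n → EuclideanSpace ℝ (Fin n)}
    (hvL : ∀ i, v i ∈ L) (hv : LinearIndependent ℝ v) {μ : ℝ} (hμ : 0 ≤ μ) (hvμ : ∀ i, ‖v i‖ ≤ μ)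
    (u : EuclideanSpace ℝ (Fin n)) : ∃ x ∈ L, NsFun n s (u - x) ≤ 2 ^ s * (μ / 2) ^ n := by
  obtain ⟨x, hx, hux⟩ := exists_mem_span_int_norm_sub_sq_le_of_linearIndependent hv (by simp) u
  refine ⟨x, Submodule.span_le.mpr (Set.range_subset_iff.mpr hvL) hx,
    nsFun_le_of_norm_sq_le hs (by positivity) ?_⟩
  calc ‖u - x‖ ^ 2 ≤ (∑ i, ‖v i‖ ^ 2) / 4 := hux
    _ ≤ (∑ _i : Fin n, μ ^ 2) / 4 := by gcongr with i; exact hvμ i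
    _ = n * (μ / 2) ^ 2 := by simp only [sum_const, card_univ, Fintype.card_fin, nsmul_eq_mul]; ring

theorem inhomMin_le_of_linearIndependent {n s : ℕ} (hs : 2 * s ≤ n)
    (L : Submodule ℤ (EuclideanSpace ℝ (Fin n))) {v : Fin n → EuclideanSpace ℝ (Fin n)}
    (hvL : ∀ i, v i ∈ L) (hv : LinearIndependent ℝ v) :
    inhomMin n s L ≤ 2 ^ s * (succMin n n L / 2) ^ n := by
  set c := succMin n n L
  obtain ⟨M, hM⟩ := (Set.finite_range fun i => ‖v i‖).bddAbove
  have hne : {μ : ℝ | ∃ w : Fin n → EuclideanSpace ℝ (Fin n),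
      (∀ i, w i ∈ (L : Set _) ∧ ‖w i‖ ≤ μ) ∧ LinearIndependent ℝ w}.Nonempty :=
    ⟨M, v, fun i => ⟨hvL i, hM ⟨i, rfl⟩⟩, hv⟩
  have hbound : ∀ μ > c, inhomMin n s L ≤ 2 ^ s * (μ / 2) ^ n := by
    intro μ hμ
    obtain ⟨μ', ⟨w, hw, hwind⟩, hμ'⟩ := exists_lt_of_csInf_lt hne hμ
    exact inhomMin_le_of_forall_exists_nsFun_sub_le <| exists_mem_nsFun_sub_le hs L
      (fun i => (hw i).1) hwind ((succMin_nonneg n n L).trans hμ.le) fun i => (hw i).2.trans hμ'.le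
  have hcont : Filter.Tendsto (fun μ : ℝ => 2 ^ s * (μ / 2) ^ n) (nhdsWithin c (Set.Ioi c))
      (nhds (2 ^ s * (c / 2) ^ n)) :=
    ((by fun_prop : Continuous fun μ : ℝ => 2 ^ s * (μ / 2) ^ n).tendsto c).mono_left
      nhdsWithin_le_nhds
  exact ge_of_tendsto hcont (eventually_nhdsWithin_of_forall hbound)

/-- Lemma 2.4: for a full-rank lattice `Λ ⊆ ℝ^n` and `0 ≤ s ≤ n/2`, the inhomogeneous minimum
satisfies `M_s(Λ) ≤ 2^{s−n} · μ_n(Λ)^n`. -/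
theorem inhomMin_le_succMin_n (n s : ℕ) (hs : 2 * s ≤ n)
    (B : Module.Basis (Fin n) ℝ (EuclideanSpace ℝ (Fin n))) :
    inhomMin n s (latticeOf B) ≤
      (2 : ℝ) ^ ((s : ℝ) - n) * succMin n n (latticeOf B) ^ n := by
  rw [Real.rpow_sub two_pos, Real.rpow_natCast, Real.rpow_natCast, div_mul_eq_mul_div,
    mul_div_assoc, ← div_pow]
  exact inhomMin_le_of_linearIndependent hs _ (fun i => Submodule.subset_span ⟨i, rfl⟩)
    B.linearIndependent
end

section
/- Let K be an imaginary quadratic field (a number field of degree 2 with signature (0,1)) and let D_K be the absolute value of its discriminant. Then the Euclidean minimum satisfies M(K) ≤ D_K / 6. -/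
/-!
Fix a complex embedding `φ` of `K`; then `|N(γ)| = |φ γ|²`. Since `1` is primitive in `𝓞 K`, it
extends to a `ℤ`-basis `1, θ`, and the discriminant of this basis gives `D_K = 4 (Im φ θ)²`.
Writing `α = x + y θ` with `x, y ∈ ℚ` and rounding first `y`, then the real part of what remains,
yields `β ∈ 𝓞 K` with `|N(α - β)| ≤ (1 + (Im φ θ)²) / 4 = 1/4 + D_K / 16`. This is at most `D_K / 6`
once `D_K ≥ 12/5`, which Minkowski's bound `D_K ≥ π² / 4` guarantees.
-/

open NumberField

/-- The Euclidean minimum of a number field `K`: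
`M(K) = sup_{α ∈ K} inf_{β ∈ ℤ_K} |Nm_{K/ℚ}(α − β)|`. -/
noncomputable def euclideanMinimum (K : Type*) [Field K] [NumberField K] : ℝ :=
  ⨆ α : K, ⨅ β : 𝓞 K, ((|Algebra.norm ℚ (α - (β : K))| : ℚ) : ℝ)

theorem Complex.exists_int_normSq_sub_le (x y : ℝ) (z : ℂ) :
    ∃ a n : ℤ, Complex.normSq (x + y * z - (a + n * z)) ≤ (1 + z.im ^ 2) / 4 := by
  set t := x + (y - round y) * z.re
  refine ⟨round t, round y, ?_⟩
  have ht := abs_le.mp (abs_sub_round t)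
  have hy := abs_le.mp (abs_sub_round y)
  have hnormSq : Complex.normSq (x + y * z - (round t + round y * z)) =
      (t - round t) ^ 2 + ((y - round y) * z.im) ^ 2 := by
    simp only [Complex.normSq_apply, Complex.sub_re, Complex.add_re, Complex.mul_re,
      Complex.sub_im, Complex.add_im, Complex.mul_im, Complex.ofReal_re, Complex.ofReal_im,
      Complex.intCast_re, Complex.intCast_im, t]
    ring
  have ht' : (t - round t) ^ 2 ≤ 1 / 4 := by nlinarith
  have hy' : (y - round y) ^ 2 ≤ 1 / 4 := by nlinarith
  rw [hnormSq, mul_pow]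
  nlinarith [sq_nonneg z.im]

namespace Module.Basis

variable {R M : Type*} [CommRing R] [AddCommGroup M] [Module R M]

theorem exists_basis_fin_two_apply_zero_eq_of_isCoprime (b : Basis (Fin 2) R M) {x : M}
    (hx : IsCoprime (b.repr x 0) (b.repr x 1)) : ∃ b' : Basis (Fin 2) R M, b' 0 = x := by
  obtain ⟨u, v, huv⟩ := hx
  set c₀ := b.repr x 0
  set c₁ := b.repr x 1
  have hx : x = c₀ • b 0 + c₁ • b 1 := by
    have h := b.sum_repr x
    rw [Fin.sum_univ_two] at h
    exact h.symm
  set y := u • b 1 - v • b 0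
  have hb : LinearIndependent R ![b 0, b 1] := by
    convert b.linearIndependent
    ext i
    fin_cases i <;> rfl
  have hli : LinearIndependent R ![x, y] := by
    refine LinearIndependent.pair_iff.mpr fun s t hst => ?_
    obtain ⟨h₀, h₁⟩ := LinearIndependent.pair_iff.mp hb (s * c₀ - t * v) (s * c₁ + t * u) (by
      rw [← hst, hx]; module)
    constructor
    · linear_combination u * h₀ + v * h₁ - s * huv
    · linear_combination c₀ * h₁ - c₁ * h₀ - t * huv
  have hsp : ⊤ ≤ Submodule.span R (Set.range ![x, y]) := by
    rw [← b.span_eq, Submodule.span_le, Set.range_subset_iff, Fin.forall_fin_two,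
      Matrix.range_cons_cons_empty]
    refine ⟨Submodule.mem_span_pair.mpr ⟨u, -c₁, ?_⟩, Submodule.mem_span_pair.mpr ⟨v, c₀, ?_⟩⟩
    · simp only [hx, y]; linear_combination (norm := module) huv • b 0
    · simp only [hx, y]; linear_combination (norm := module) huv • b 1
  exact ⟨Basis.mk hli hsp, by simp⟩

end Module.Basis

theorem Algebra.isUnit_algebraMap_iff_of_free {R S : Type*} [CommRing R] [CommRing S]
    [Algebra R S] [IsDomain R] [Nontrivial S] [Module.Free R S] [Module.Finite R S] {r : R} :
    IsUnit (algebraMap R S r) ↔ IsUnit r := by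
  refine ⟨fun h => ?_, fun h => h.map _⟩
  have := h.map (Algebra.norm R (S := S))
  rw [Algebra.norm_algebraMap] at this
  exact (isUnit_pow_iff Module.finrank_pos.ne').mp this

namespace NumberField

variable {K : Type*} [Field K] [NumberField K]

theorem RingOfIntegers.exists_basis_fin_two_apply_zero_eq_one (hn : Module.finrank ℚ K = 2) :
    ∃ b : Module.Basis (Fin 2) ℤ (𝓞 K), b 0 = 1 := by
  have hcard : Fintype.card (Module.Free.ChooseBasisIndex ℤ (𝓞 K)) = 2 := by
    rw [← Module.finrank_eq_card_chooseBasisIndex, RingOfIntegers.rank, hn]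
  let b := (RingOfIntegers.basis K).reindex (Fintype.equivFinOfCardEq hcard)
  refine b.exists_basis_fin_two_apply_zero_eq_of_isCoprime (isRelPrime_iff_isCoprime.mp ?_)
  rintro d ⟨e₀, he₀⟩ ⟨e₁, he₁⟩
  have h : (d : 𝓞 K) * (e₀ • b 0 + e₁ • b 1) = 1 := by
    have h := b.sum_repr 1
    rw [Fin.sum_univ_two, he₀, he₁] at h
    rw [← h]
    simp only [zsmul_eq_mul, Int.cast_mul]
    ring
  rw [← Algebra.isUnit_algebraMap_iff_of_free (S := 𝓞 K), eq_intCast]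
  exact IsUnit.of_mul_eq_one _ h

theorem exists_algHom_complex_trace_eq_norm_eq [IsTotallyComplex K] (hn : Module.finrank ℚ K = 2) :
    ∃ φ : K →ₐ[ℚ] ℂ, ∀ x : K,
      (Algebra.trace ℚ K x : ℂ) = φ x + starRingEnd ℂ (φ x) ∧
      (Algebra.norm ℚ x : ℝ) = Complex.normSq (φ x) := by
  classical
  obtain ⟨φ⟩ : Nonempty (K →ₐ[ℚ] ℂ) := by
    rw [← Fintype.card_pos_iff, AlgHom.card, hn]; norm_num
  let ψ : K →ₐ[ℚ] ℂ := (Complex.conjAe.toAlgHom.restrictScalars ℚ).comp φ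
  have hψ : ∀ x, ψ x = starRingEnd ℂ (φ x) := fun x => rfl
  have hne : φ ≠ ψ := by
    intro h
    apply IsTotallyComplex.complexEmbedding_not_isReal (φ : K →+* ℂ)
    ext x
    exact (congrArg (· x) h).symm
  have huniv : (Finset.univ : Finset (K →ₐ[ℚ] ℂ)) = {φ, ψ} :=
    (Finset.eq_univ_of_card _ (by rw [Finset.card_pair hne, AlgHom.card, hn])).symm
  refine ⟨φ, fun x => ⟨?_, ?_⟩⟩
  · rw [← eq_ratCast (algebraMap ℚ ℂ), trace_eq_sum_embeddings, huniv, Finset.sum_pair hne, hψ]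
  · have h := Algebra.norm_eq_prod_embeddings ℚ ℂ x
    rw [huniv, Finset.prod_pair hne, hψ, Complex.mul_conj, eq_ratCast] at h
    exact_mod_cast h

theorem discr_eq_neg_four_mul_im_sq {φ : K →ₐ[ℚ] ℂ}
    (htr : ∀ x : K, (Algebra.trace ℚ K x : ℂ) = φ x + starRingEnd ℂ (φ x))
    (b : Module.Basis (Fin 2) ℤ (𝓞 K)) (hb : b 0 = 1) :
    (discr K : ℝ) = -4 * (φ (b 1)).im ^ 2 := by
  let bK := b.localizationLocalization ℚ (nonZeroDivisors ℤ) K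
  have hbK : ∀ i, bK i = b i := b.localizationLocalization_apply ℚ (nonZeroDivisors ℤ) K
  have hdiscr : (discr K : ℚ) = Algebra.discr ℚ bK := by
    rw [← discr_eq_discr K b, Algebra.discr_localizationLocalization, eq_intCast]
  have hC : (discr K : ℂ) = (φ (b 1) - starRingEnd ℂ (φ (b 1))) ^ 2 := by
    have hdiscrC := congrArg (fun q : ℚ => (q : ℂ)) hdiscr
    simp only [Rat.cast_intCast] at hdiscrC
    rw [hdiscrC, Algebra.discr_def, Matrix.det_fin_two]
    simp only [Algebra.traceMatrix_apply, Algebra.traceForm_apply, hbK, hb]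
    push_cast
    simp only [htr, map_mul, map_one]
    ring
  rw [Complex.sub_conj] at hC
  have hR : ((discr K : ℝ) : ℂ) = ((-4 * (φ (b 1)).im ^ 2 : ℝ) : ℂ) := by
    push_cast
    rw [hC, mul_pow, Complex.I_sq]
    push_cast
    ring
  exact_mod_cast hR

theorem exists_abs_norm_sub_le {φ : K →ₐ[ℚ] ℂ}
    (hnorm : ∀ x : K, (Algebra.norm ℚ x : ℝ) = Complex.normSq (φ x))
    (b : Module.Basis (Fin 2) ℤ (𝓞 K)) (hb : b 0 = 1) (α : K) :
    ∃ β : 𝓞 K, ((|Algebra.norm ℚ (α - β)| : ℚ) : ℝ) ≤ (1 + (φ (b 1)).im ^ 2) / 4 := by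
  let bK := b.localizationLocalization ℚ (nonZeroDivisors ℤ) K
  have hbK : ∀ i, bK i = b i := b.localizationLocalization_apply ℚ (nonZeroDivisors ℤ) K
  have hα : φ α = (bK.repr α 0 : ℝ) + (bK.repr α 1 : ℝ) * φ (b 1) := by
    have h := congrArg φ (bK.sum_repr α)
    rw [Fin.sum_univ_two, hbK, hbK, hb] at h
    rw [← h]
    simp [Algebra.smul_def]
  obtain ⟨a, n, han⟩ := Complex.exists_int_normSq_sub_le (bK.repr α 0) (bK.repr α 1) (φ (b 1))
  refine ⟨a + n * b 1, ?_⟩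
  rw [Rat.cast_abs, hnorm, abs_of_nonneg (Complex.normSq_nonneg _), map_sub, hα]
  simpa using han

end NumberField

theorem euclideanMinimum_le_of_forall_exists {K : Type*} [Field K] [NumberField K] {c : ℝ}
    (h : ∀ α : K, ∃ β : 𝓞 K, ((|Algebra.norm ℚ (α - β)| : ℚ) : ℝ) ≤ c) :
    euclideanMinimum K ≤ c := by
  refine ciSup_le fun α => ?_
  obtain ⟨β, hβ⟩ := h α
  refine (ciInf_le ⟨0, ?_⟩ β).trans hβ
  rintro _ ⟨β', rfl⟩
  positivity

theorem euclideanMinimum_le_imag_quadratic_general (K : Type*) [Field K] [NumberField K]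
    (hn : Module.finrank ℚ K = 2)
    (hr : InfinitePlace.nrRealPlaces K = 0)
    (DK : ℝ) (hD : DK = |(NumberField.discr K : ℝ)|) :
    euclideanMinimum K ≤ DK / 6 := by
  have : IsTotallyComplex K := nrRealPlaces_eq_zero_iff.mp hr
  obtain ⟨φ, hφ⟩ := exists_algHom_complex_trace_eq_norm_eq hn
  obtain ⟨b, hb⟩ := RingOfIntegers.exists_basis_fin_two_apply_zero_eq_one hn
  have hDK : DK = 4 * (φ (b 1)).im ^ 2 := by
    rw [hD, discr_eq_neg_four_mul_im_sq (fun x => (hφ x).1) b hb, abs_of_nonpos (by nlinarith)]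
    ring
  have hDK_ge : Real.pi ^ 2 / 4 ≤ DK := by
    have hMinkowski := abs_discr_ge (K := K) (by omega)
    rw [hn, Int.cast_abs, ← hD] at hMinkowski
    linarith
  refine euclideanMinimum_le_of_forall_exists fun α => ?_
  obtain ⟨β, hβ⟩ := exists_abs_norm_sub_le (fun x => (hφ x).2) b hb α
  exact ⟨β, hβ.trans (by nlinarith [Real.pi_gt_d2])⟩

/-- Table 4.2 entry: if `K` is a imaginary quadratic field (degree `2`, signature `(0,1)`) and `D_K` is the absolute value of its discriminant,
then the Euclidean minimum satisfies the bound below. -/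
theorem euclideanMinimum_le_imag_quadratic (K : Type*) [Field K] [NumberField K]
    (hn : Module.finrank ℚ K = 2)
    (hr : InfinitePlace.nrRealPlaces K = 0) (hs : InfinitePlace.nrComplexPlaces K = 1)
    (DK : ℝ) (hD : DK = |(NumberField.discr K : ℝ)|) :
    euclideanMinimum K ≤ DK / 6 :=
  euclideanMinimum_le_imag_quadratic_general K hn hr DK hD
end
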